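/- For the regular d-dimensional grid graph with all side lengths equal to n, for each integer z with 0 ≤ z ≤ n-1, the number λ = 1 + cos(πz/(n-1)) is an eigenvalue of the normalized Laplacian, with eigenvector whose component at node (x_1, ..., x_d) equals sqrt(deg(x_1, ..., x_d)) · Π_{j=1}^d (-1)^{x_j} cos((πz/(n-1))(x_j - 1)), where deg(x) = d + #{j : x_j ≠ 1 and x_j ≠ n}. -/

import Mathlib

/-!
On the path `P_n`, the function `g t = (-1)^(t+1) cos (θ t)` with `θ = π z / (n - 1)` solves
`A g = -cos θ • D g`: at interior vertices this is
`cos (θ (t-1)) + cos (θ (t+1)) = 2 cos θ cos (θ t)`, and at the two ends `θ (n - 1) ∈ π ℤ`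
makes `g` reflect like a Neumann eigenfunction.
Since the degree of a vertex of a Cartesian power is the sum of the degrees of its coordinates,
the tensor power `w = g ⊗ ⋯ ⊗ g` solves the same equation on the grid, and then `D^{1/2} w` is an
eigenvector of `1 - D^{-1/2} A D^{-1/2}` with eigenvalue `1 + cos θ`.
-/

open Real Matrix Finset

section BoxPower

variable {ι V : Type*} [Fintype ι] [DecidableEq ι] [Fintype V] [DecidableEq V]

def boxPowAdj (r : V → V → Prop) (x y : ι → V) : Prop :=
  ∃ j, r (x j) (y j) ∧ ∀ k, k ≠ j → x k = y k

instance (r : V → V → Prop) [DecidableRel r] :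
    DecidableRel (boxPowAdj (ι := ι) r) :=
  fun _ _ => by unfold boxPowAdj; infer_instance

lemma sum_filter_boxPowAdj {M : Type*} [AddCommMonoid M] {r : V → V → Prop} [DecidableRel r]
    (hr : ∀ a, ¬ r a a) (x : ι → V) (h : (ι → V) → M) :
    ∑ y ∈ univ.filter (boxPowAdj r x), h y =
      ∑ j, ∑ t ∈ univ.filter (r (x j)), h (Function.update x j t) := by
  have hnbhd : univ.filter (boxPowAdj r x) =
      univ.biUnion fun j => (univ.filter (r (x j))).image (Function.update x j) := by
    ext y
    simp only [mem_filter, mem_univ, true_and, mem_biUnion, mem_image, boxPowAdj]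
    constructor
    · rintro ⟨j, hj, hxy⟩
      refine ⟨j, y j, hj, funext fun k => ?_⟩
      by_cases hk : k = j
      · subst hk; simp
      · simp [Function.update_of_ne hk, hxy k hk]
    · rintro ⟨j, t, ht, rfl⟩
      exact ⟨j, by simpa using ht, fun k hk => by simp [Function.update_of_ne hk]⟩
  have hdisj : (Set.univ : Set ι).PairwiseDisjoint
      fun j => (univ.filter (r (x j))).image (Function.update x j) := by
    intro j _ j' _ hjj'
    simp only [Function.onFun, disjoint_left, mem_image, mem_filter, mem_univ, true_and]
    rintro _ ⟨t, ht, rfl⟩ ⟨t', -, hupd⟩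
    have : x j = t := by simpa [Function.update_of_ne hjj'] using congrFun hupd j
    exact hr _ (this ▸ ht)
  rw [hnbhd, sum_biUnion (by simpa using hdisj)]
  exact sum_congr rfl fun j _ => sum_image fun _ _ _ _ h => Function.update_injective x j h

lemma card_filter_boxPowAdj {r : V → V → Prop} [DecidableRel r] (hr : ∀ a, ¬ r a a) (x : ι → V) :
    #(univ.filter (boxPowAdj r x)) = ∑ j, #(univ.filter (r (x j))) := by
  simpa only [card_eq_sum_ones] using sum_filter_boxPowAdj hr x (fun _ => 1)

lemma sum_filter_boxPowAdj_prod {r : V → V → Prop} [DecidableRel r] (hr : ∀ a, ¬ r a a)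
    {g : V → ℝ} {μ : ℝ}
    (hg : ∀ s, ∑ t ∈ univ.filter (r s), g t = μ * #(univ.filter (r s)) * g s) (x : ι → V) :
    ∑ y ∈ univ.filter (boxPowAdj r x), ∏ j, g (y j) =
      μ * #(univ.filter (boxPowAdj r x)) * ∏ j, g (x j) := by
  have hupdate : ∀ j t, ∏ k, g (Function.update x j t k) = g t * ∏ k ∈ univ.erase j, g (x k) := by
    intro j t
    simp only [Function.apply_update (fun _ => g), prod_update_of_mem (mem_univ j),
      sdiff_singleton_eq_erase]
  simp only [sum_filter_boxPowAdj (M := ℝ) hr, card_filter_boxPowAdj hr, hupdate,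
    ← Finset.sum_mul, hg, Nat.cast_sum, Finset.mul_sum]
  rw [Finset.sum_mul]
  refine Finset.sum_congr rfl fun j _ => ?_
  rw [← mul_prod_erase _ (fun k => g (x k)) (mem_univ j)]
  ring

end BoxPower

section Path

variable {n : ℕ}

def pathAdj (n : ℕ) (s t : Fin n) : Prop := (s : ℕ) + 1 = t ∨ (t : ℕ) + 1 = s

instance : DecidableRel (pathAdj n) := fun _ _ => by unfold pathAdj; infer_instance

lemma pathAdj_irrefl (s : Fin n) : ¬ pathAdj n s s := by
  simp [pathAdj]

lemma filter_pathAdj_of_val_eq_zero (hn : 2 ≤ n) {s : Fin n} (hs : (s : ℕ) = 0) :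
    univ.filter (pathAdj n s) = {⟨1, by omega⟩} := by
  ext t
  simp only [mem_filter, mem_univ, true_and, mem_singleton, pathAdj, Fin.ext_iff]
  omega

lemma filter_pathAdj_of_val_eq_sub_one (hn : 2 ≤ n) {s : Fin n} (hs : (s : ℕ) = n - 1) :
    univ.filter (pathAdj n s) = {⟨n - 2, by omega⟩} := by
  ext t
  have := t.isLt
  simp only [mem_filter, mem_univ, true_and, mem_singleton, pathAdj, Fin.ext_iff]
  omega

lemma filter_pathAdj_of_val_ne {s : Fin n} (hs₀ : (s : ℕ) ≠ 0) (hs₁ : (s : ℕ) ≠ n - 1) :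
    univ.filter (pathAdj n s) = {⟨s - 1, by omega⟩, ⟨s + 1, by omega⟩} := by
  ext t
  simp only [mem_filter, mem_univ, true_and, mem_insert, mem_singleton, pathAdj, Fin.ext_iff]
  omega

lemma card_filter_pathAdj (hn : 2 ≤ n) (s : Fin n) :
    #(univ.filter (pathAdj n s)) = 1 + if (s : ℕ) ≠ 0 ∧ (s : ℕ) ≠ n - 1 then 1 else 0 := by
  by_cases hs₀ : (s : ℕ) = 0
  · simp [filter_pathAdj_of_val_eq_zero hn hs₀, hs₀]
  by_cases hs₁ : (s : ℕ) = n - 1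
  · simp [filter_pathAdj_of_val_eq_sub_one hn hs₁, hs₁]
  rw [filter_pathAdj_of_val_ne hs₀ hs₁, card_pair (by simp [Fin.ext_iff]), if_pos ⟨hs₀, hs₁⟩]

noncomputable def pathEigenvector (θ : ℝ) (t : ℕ) : ℝ := (-1) ^ (t + 1) * cos (θ * t)

lemma pathEigenvector_add_two (θ : ℝ) (m : ℕ) :
    pathEigenvector θ m + pathEigenvector θ (m + 2) = -(2 * cos θ) * pathEigenvector θ (m + 1) := by
  have hm : θ * m = θ * (m + 1 : ℕ) - θ := by push_cast; ring
  have hm2 : θ * (m + 2 : ℕ) = θ * (m + 1 : ℕ) + θ := by push_cast; ring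
  simp only [pathEigenvector, hm, hm2, cos_add, cos_sub, pow_succ]
  ring

lemma pathEigenvector_one (θ : ℝ) : pathEigenvector θ 1 = -cos θ * pathEigenvector θ 0 := by
  simp [pathEigenvector]

lemma pathEigenvector_sub_two {z : ℕ} {θ : ℝ} (hn : 2 ≤ n) (hθ : θ * (n - 1) = z * π) :
    pathEigenvector θ (n - 2) = -cos θ * pathEigenvector θ (n - 1) := by
  obtain ⟨m, rfl⟩ : ∃ m, n = m + 2 := ⟨n - 2, by omega⟩
  have hend : θ * (m + 1 : ℕ) = z * π := by rw [← hθ]; push_cast; ring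
  have hm : θ * m = z * π - θ := by rw [← hend]; push_cast; ring
  have hcos : cos (z * π) = (-1) ^ z := by simpa using cos_nat_mul_pi_sub 0 z
  simp only [pathEigenvector, Nat.add_sub_cancel, show m + 2 - 1 = m + 1 by omega, hend, hm,
    cos_nat_mul_pi_sub, hcos, pow_succ]
  ring

lemma sum_filter_pathAdj_pathEigenvector {z : ℕ} {θ : ℝ} (hn : 2 ≤ n)
    (hθ : θ * (n - 1) = z * π) (s : Fin n) :
    ∑ t ∈ univ.filter (pathAdj n s), pathEigenvector θ t =
      -cos θ * #(univ.filter (pathAdj n s)) * pathEigenvector θ s := by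
  by_cases hs₀ : (s : ℕ) = 0
  · simp [filter_pathAdj_of_val_eq_zero hn hs₀, hs₀, pathEigenvector_one]
  by_cases hs₁ : (s : ℕ) = n - 1
  · simp [filter_pathAdj_of_val_eq_sub_one hn hs₁, hs₁, pathEigenvector_sub_two hn hθ]
  obtain ⟨m, hm⟩ : ∃ m, (s : ℕ) = m + 1 := ⟨s - 1, by omega⟩
  rw [filter_pathAdj_of_val_ne hs₀ hs₁, sum_pair (by simp [Fin.ext_iff]),
    card_pair (by simp [Fin.ext_iff])]
  simp only [hm, Nat.add_sub_cancel]
  linear_combination pathEigenvector_add_two θ m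

end Path

lemma normalizedLaplacian_mulVec_sqrt_mul {V : Type*} [Fintype V] [DecidableEq V]
    {A : Matrix V V ℝ} {w : V → ℝ} {μ : ℝ} (hpos : ∀ x, 0 < ∑ y, A x y)
    (hw : A *ᵥ w = fun x => μ * (∑ y, A x y) * w x) :
    (1 - diagonal (fun x => (√(∑ y, A x y))⁻¹) * A * diagonal (fun x => (√(∑ y, A x y))⁻¹)) *ᵥ
        (fun x => √(∑ y, A x y) * w x) = (1 - μ) • fun x => √(∑ y, A x y) * w x := by
  have hsqrt : ∀ x, √(∑ y, A x y) ≠ 0 := fun x => (sqrt_pos.2 (hpos x)).ne'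
  have hscale : (diagonal fun x => (√(∑ y, A x y))⁻¹) *ᵥ (fun x => √(∑ y, A x y) * w x) = w := by
    funext x
    rw [mulVec_diagonal, inv_mul_cancel_left₀ (hsqrt x)]
  rw [sub_mulVec, one_mulVec, ← mulVec_mulVec, ← mulVec_mulVec, hscale, hw]
  funext x
  rw [Pi.sub_apply, mulVec_diagonal, Pi.smul_apply, smul_eq_mul]
  field_simp [hsqrt x]
  rw [sq_sqrt (hpos x).le]
  ring

section Grid

variable {d n : ℕ} {A : Matrix (Fin d → Fin n) (Fin d → Fin n) ℝ}

lemma sum_mul_eq_sum_filter_boxPowAdj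
    (hA : ∀ x y, A x y = if boxPowAdj (pathAdj n) x y then 1 else 0)
    (x : Fin d → Fin n) (h : (Fin d → Fin n) → ℝ) :
    ∑ y, A x y * h y = ∑ y ∈ univ.filter (boxPowAdj (pathAdj n) x), h y := by
  simp only [hA, boole_mul, sum_filter]

lemma sum_eq_card_filter_boxPowAdj
    (hA : ∀ x y, A x y = if boxPowAdj (pathAdj n) x y then 1 else 0) (x : Fin d → Fin n) :
    ∑ y, A x y = #(univ.filter (boxPowAdj (pathAdj n) x)) := by
  rw [card_eq_sum_ones, Nat.cast_sum, ← sum_mul_eq_sum_filter_boxPowAdj hA]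
  simp

lemma sum_eq_dim_add_card_interior (hn : 2 ≤ n)
    (hA : ∀ x y, A x y = if boxPowAdj (pathAdj n) x y then 1 else 0) (x : Fin d → Fin n) :
    ∑ y, A x y = d + #(univ.filter fun j => (x j : ℕ) ≠ 0 ∧ (x j : ℕ) ≠ n - 1) := by
  rw [sum_eq_card_filter_boxPowAdj hA, card_filter_boxPowAdj pathAdj_irrefl]
  simp only [card_filter_pathAdj hn, sum_add_distrib, card_filter]
  simp

lemma mulVec_prod_pathEigenvector {z : ℕ} {θ : ℝ} (hn : 2 ≤ n) (hθ : θ * (n - 1) = z * π)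
    (hA : ∀ x y, A x y = if boxPowAdj (pathAdj n) x y then 1 else 0) :
    A *ᵥ (fun x => ∏ j, pathEigenvector θ (x j)) =
      fun x => -cos θ * (∑ y, A x y) * ∏ j, pathEigenvector θ (x j) := by
  funext x
  rw [mulVec, dotProduct, sum_mul_eq_sum_filter_boxPowAdj hA, sum_eq_card_filter_boxPowAdj hA]
  exact sum_filter_boxPowAdj_prod pathAdj_irrefl (g := fun s : Fin n => pathEigenvector θ s)
    (sum_filter_pathAdj_pathEigenvector hn hθ) x

end Grid

open scoped Classical in
/-- A vertex `x` has coordinates `x j + 1 ∈ {1,…,n}`. -/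
theorem regular_grid_normalized_eigenpair_general (d n : ℕ) (hd : 1 ≤ d) (hn : 2 ≤ n)
    (z : ℕ)
    (A : Matrix (Fin d → Fin n) (Fin d → Fin n) ℝ)
    (hA : ∀ x y, A x y =
      if ∃ j, ((x j : ℕ) + 1 = (y j : ℕ) ∨ (y j : ℕ) + 1 = (x j : ℕ)) ∧
          ∀ k, k ≠ j → x k = y k then 1 else 0)
    (NL : Matrix (Fin d → Fin n) (Fin d → Fin n) ℝ)
    (hNL : NL = 1 - (Matrix.diagonal fun x => (Real.sqrt (∑ y, A x y))⁻¹) * A *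
        (Matrix.diagonal fun x => (Real.sqrt (∑ y, A x y))⁻¹))
    (v : (Fin d → Fin n) → ℝ)
    (hv : ∀ x, v x = Real.sqrt
          ((d : ℝ) + (Finset.univ.filter fun j => (x j : ℕ) ≠ 0 ∧ (x j : ℕ) ≠ n - 1).card) *
        ∏ j, (-1 : ℝ)^((x j : ℕ) + 1) *
          Real.cos ((π * z / (n - 1)) * (((x j : ℕ) : ℝ) + 1 - 1))) :
    NL.mulVec v = (1 + Real.cos (π * z / (n - 1))) • v ∧ v ≠ 0 := by
  have hθ : π * z / (n - 1) * (n - 1) = z * π := by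
    have : (2 : ℝ) ≤ n := by exact_mod_cast hn
    field_simp [show (n : ℝ) - 1 ≠ 0 by linarith]
  have hA' : ∀ x y, A x y = if boxPowAdj (pathAdj n) x y then 1 else 0 :=
    fun x y => (hA x y).trans (if_congr Iff.rfl rfl rfl)
  have hdeg := sum_eq_dim_add_card_interior hn hA'
  have hpos : ∀ x, 0 < ∑ y, A x y := fun x => by
    rw [hdeg]
    have : (1 : ℝ) ≤ d := by exact_mod_cast hd
    positivity
  have hv' : v = fun x => √(∑ y, A x y) * ∏ j, pathEigenvector (π * z / (n - 1)) (x j) := by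
    funext x
    simp only [hv, hdeg, pathEigenvector, add_sub_cancel_right]
  refine ⟨?_, fun hv0 => ?_⟩
  · rw [hNL, hv', normalizedLaplacian_mulVec_sqrt_mul hpos (mulVec_prod_pathEigenvector hn hθ hA'),
      sub_neg_eq_add]
  · have hcorner := congrFun hv0 fun _ => ⟨0, by omega⟩
    simp [hv', pathEigenvector] at hcorner
    exact (sqrt_pos.2 (hpos _)).ne' hcorner

open scoped Classical in
/-- Closed-form normalized-Laplacian eigenpairs of the regular d-dimensional grid graph
    (all side lengths equal to `n`), for equal index components `z_j = z`. A vertex `x` has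
    coordinates `x j + 1 ∈ {1,…,n}`, and its degree is
    `d + #{j : x j + 1 ≠ 1 ∧ x j + 1 ≠ n}`. -/
theorem regular_grid_normalized_eigenpair (d n : ℕ) (hd : 1 ≤ d) (hn : 2 ≤ n)
    (z : ℕ) (hz : z ≤ n - 1)
    (A : Matrix (Fin d → Fin n) (Fin d → Fin n) ℝ)
    (hA : ∀ x y, A x y =
      if ∃ j, ((x j : ℕ) + 1 = (y j : ℕ) ∨ (y j : ℕ) + 1 = (x j : ℕ)) ∧
          ∀ k, k ≠ j → x k = y k then 1 else 0)
    (NL : Matrix (Fin d → Fin n) (Fin d → Fin n) ℝ)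
    (hNL : NL = 1 - (Matrix.diagonal fun x => (Real.sqrt (∑ y, A x y))⁻¹) * A *
        (Matrix.diagonal fun x => (Real.sqrt (∑ y, A x y))⁻¹))
    (v : (Fin d → Fin n) → ℝ)
    (hv : ∀ x, v x = Real.sqrt
          ((d : ℝ) + (Finset.univ.filter fun j => (x j : ℕ) ≠ 0 ∧ (x j : ℕ) ≠ n - 1).card) *
        ∏ j, (-1 : ℝ)^((x j : ℕ) + 1) *
          Real.cos ((π * z / (n - 1)) * (((x j : ℕ) : ℝ) + 1 - 1))) :
    NL.mulVec v = (1 + Real.cos (π * z / (n - 1))) • v ∧ v ≠ 0 :=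
  regular_grid_normalized_eigenpair_general d n hd hn z A hA NL hNL v hv
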